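/- arXiv:2602.20376 — 2 statements merged into one kernel-verified Lean document; each statement's English description precedes it below -/
import Mathlib

section
/- For a complex vector a ∈ ℂⁿ and z ∈ 𝒜_Kⁿ, the maximum over z of |z† a| equals the maximum over z ∈ 𝒜_Kⁿ and φ ∈ [0, 2π) of Re(z† a · e^{iφ}), and this in turn equals max over φ of the sum over i of max over z_i ∈ 𝒜_K of Re(conj(z_i)·a_i·e^{iφ}). -/
open Complex BigOperators

/-!
Rotating `w ∈ ℂ` by `e^{-i arg w}` makes it real and equal to `‖w‖`, while no rotation makes
its real part exceed `‖w‖`; hence maximizing `|z† a|` is the same as maximizing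
`Re(z† a e^{iφ})` jointly in `z` and `φ`. For fixed `φ` the latter is a sum of terms each
depending on a single coordinate `zᵢ`, ranging over the finite set `𝒜_K`, so it is maximized
coordinatewise.
-/

lemma re_mul_exp_mul_I_le_norm (w : ℂ) (φ : ℝ) : (w * exp (φ * I)).re ≤ ‖w‖ :=
  calc (w * exp (φ * I)).re ≤ ‖w * exp (φ * I)‖ := re_le_norm _
    _ = ‖w‖ := by rw [norm_mul, norm_exp_ofReal_mul_I, mul_one]

lemma exists_mem_Ico_re_mul_exp_mul_I_eq_norm (w : ℂ) :
    ∃ φ ∈ Set.Ico 0 (2 * Real.pi), (w * exp (φ * I)).re = ‖w‖ := by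
  have hper : Function.Periodic (fun φ : ℝ => exp (φ * I)) (2 * Real.pi) := fun φ => by
    simpa using exp_mul_I_periodic φ
  obtain ⟨φ, hφ, hexp⟩ := hper.exists_mem_Ico₀ Real.two_pi_pos (-w.arg)
  refine ⟨φ, hφ, ?_⟩
  have hrot : w * exp ((-w.arg : ℝ) * I) = ‖w‖ := by
    nth_rewrite 1 [← norm_mul_exp_arg_mul_I w]
    rw [mul_assoc, ← exp_add, ofReal_neg, neg_mul, add_neg_cancel, exp_zero, mul_one]
  rw [← hexp, hrot, ofReal_re]

theorem sSup_norm_eq_sSup_re_mul_exp_mul_I {ι : Type*} (p : ι → Prop) (w : ι → ℂ) :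
    sSup {x : ℝ | ∃ z, p z ∧ x = ‖w z‖} =
      sSup {x : ℝ | ∃ z, ∃ φ : ℝ, p z ∧ φ ∈ Set.Ico 0 (2 * Real.pi) ∧
        x = (w z * exp (φ * I)).re} := by
  apply csSup_eq_csSup_of_forall_exists_le
  · rintro x ⟨z, hz, rfl⟩
    obtain ⟨φ, hφ, hre⟩ := exists_mem_Ico_re_mul_exp_mul_I_eq_norm (w z)
    exact ⟨_, ⟨z, φ, hz, hφ, rfl⟩, hre.ge⟩
  · rintro y ⟨z, φ, hz, -, rfl⟩
    exact ⟨_, ⟨z, hz, rfl⟩, re_mul_exp_mul_I_le_norm (w z) φ⟩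

lemma finite_setOf_pow_eq_one {K : ℕ} (hK : 0 < K) : {z : ℂ | z ^ K = 1}.Finite := by
  convert (Polynomial.nthRootsFinset K (1 : ℂ)).finite_toSet using 1
  ext z
  simp [Polynomial.mem_nthRootsFinset hK]

lemma exists_pow_eq_one_isGreatest {K : ℕ} (hK : 0 < K) (f : ℂ → ℝ) :
    ∃ z₀ : ℂ, z₀ ^ K = 1 ∧ IsGreatest {y : ℝ | ∃ z : ℂ, z ^ K = 1 ∧ y = f z} (f z₀) := by
  obtain ⟨z₀, hz₀, hmax⟩ :=
    Set.exists_max_image _ f (finite_setOf_pow_eq_one hK) ⟨1, one_pow K⟩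
  exact ⟨z₀, hz₀, ⟨z₀, hz₀, rfl⟩, by rintro y ⟨z, hz, rfl⟩; exact hmax z hz⟩

theorem isGreatest_sum_sSup_pow_eq_one {ι : Type*} [Fintype ι] {K : ℕ} (hK : 0 < K)
    (f : ι → ℂ → ℝ) :
    IsGreatest {x : ℝ | ∃ z : ι → ℂ, (∀ i, z i ^ K = 1) ∧ x = ∑ i, f i (z i)}
      (∑ i, sSup {y : ℝ | ∃ zi : ℂ, zi ^ K = 1 ∧ y = f i zi}) := by
  choose z₀ hz₀ hmax using fun i => exists_pow_eq_one_isGreatest hK (f i)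
  have hsSup (i : ι) : sSup {y : ℝ | ∃ zi : ℂ, zi ^ K = 1 ∧ y = f i zi} = f i (z₀ i) :=
    (hmax i).csSup_eq
  simp only [hsSup]
  refine ⟨⟨z₀, hz₀, rfl⟩, ?_⟩
  rintro x ⟨z, hz, rfl⟩
  exact Finset.sum_le_sum fun i _ => (hmax i).2 ⟨z i, hz i, rfl⟩

/-- The double-maximization reformulation: for `a ∈ ℂⁿ`,
`max_{z ∈ 𝒜_Kⁿ} |z† a| = max_{z, φ} Re(z† a e^{iφ}) = max_φ ∑ᵢ max_{zᵢ} Re(conj zᵢ · aᵢ · e^{iφ})`. -/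
theorem stmt_5 (n K : ℕ) (hK : 0 < K) (a : Fin n → ℂ) :
    sSup {x : ℝ | ∃ z : Fin n → ℂ, (∀ i, z i ^ K = 1) ∧
        x = ‖∑ i, (starRingEnd ℂ) (z i) * a i‖} =
      sSup {x : ℝ | ∃ (z : Fin n → ℂ) (φ : ℝ), (∀ i, z i ^ K = 1) ∧
        φ ∈ Set.Ico (0 : ℝ) (2 * Real.pi) ∧
        x = ((∑ i, (starRingEnd ℂ) (z i) * a i) * Complex.exp (φ * Complex.I)).re} ∧
    sSup {x : ℝ | ∃ (z : Fin n → ℂ) (φ : ℝ), (∀ i, z i ^ K = 1) ∧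
        φ ∈ Set.Ico (0 : ℝ) (2 * Real.pi) ∧
        x = ((∑ i, (starRingEnd ℂ) (z i) * a i) * Complex.exp (φ * Complex.I)).re} =
      sSup {x : ℝ | ∃ φ : ℝ, φ ∈ Set.Ico (0 : ℝ) (2 * Real.pi) ∧
        x = ∑ i, sSup {y : ℝ | ∃ zi : ℂ, zi ^ K = 1 ∧
          y = ((starRingEnd ℂ) zi * a i * Complex.exp (φ * Complex.I)).re}} := by
  refine ⟨sSup_norm_eq_sSup_re_mul_exp_mul_I (fun z : Fin n → ℂ => ∀ i, z i ^ K = 1)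
    (fun z => ∑ i, (starRingEnd ℂ) (z i) * a i), ?_⟩
  have hsplit (z : Fin n → ℂ) (φ : ℝ) :
      ((∑ i, (starRingEnd ℂ) (z i) * a i) * exp (φ * I)).re =
        ∑ i, ((starRingEnd ℂ) (z i) * a i * exp (φ * I)).re := by
    rw [Finset.sum_mul, re_sum]
  have hmax (φ : ℝ) := isGreatest_sum_sSup_pow_eq_one hK
    fun i zi => ((starRingEnd ℂ) zi * a i * exp (φ * I)).re
  apply csSup_eq_csSup_of_forall_exists_le
  · rintro x ⟨z, φ, hz, hφ, rfl⟩
    exact ⟨_, ⟨φ, hφ, rfl⟩, hsplit z φ ▸ (hmax φ).2 ⟨z, hz, rfl⟩⟩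
  · rintro y ⟨φ, hφ, rfl⟩
    obtain ⟨z, hz, hzmax⟩ := (hmax φ).1
    exact ⟨_, ⟨z, φ, hz, hφ, rfl⟩, (hzmax.trans (hsplit z φ).symm).le⟩
end

section
/- Fix K ≥ 3 and a vector u ∈ ℂⁿ. There exists a choice of z ∈ 𝒜_Kⁿ (taking z_ℓ to be the K-th root of unity whose phase sector contains arg(u_ℓ)) such that |z† u|² ≥ cos²(π/K)·‖u‖₁², and in particular |z† u|² ≥ (1/4)·‖u‖₁² since cos(π/K) ≥ 1/2 for K ≥ 3. -/
/-!
Rotate each `u l` by the `K`-th root of unity nearest to its phase: the leftover angle is at most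
`π / K`, so `Re (conj (z l) * u l) ≥ cos (π / K) * ‖u l‖`. Summing, the real part of `z† u`, hence
its modulus, is at least `cos (π / K) * ‖u‖₁`, and `cos (π / K) ≥ cos (π / 3) = 1 / 2` for `K ≥ 3`.
-/

open Complex BigOperators

lemma abs_sub_two_pi_mul_round_div_le (θ : ℝ) {K : ℝ} (hK : 0 < K) :
    |θ - 2 * Real.pi * round (θ * K / (2 * Real.pi)) / K| ≤ Real.pi / K := by
  have hround := abs_sub_round (θ * K / (2 * Real.pi))
  have hscale : θ - 2 * Real.pi * round (θ * K / (2 * Real.pi)) / K =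
      2 * Real.pi / K * (θ * K / (2 * Real.pi) - round (θ * K / (2 * Real.pi))) := by
    field_simp
  rw [hscale, abs_mul, abs_of_pos (by positivity)]
  calc 2 * Real.pi / K * |θ * K / (2 * Real.pi) - round (θ * K / (2 * Real.pi))|
      ≤ 2 * Real.pi / K * (1 / 2) := by gcongr
    _ = Real.pi / K := by ring

lemma exp_two_pi_mul_int_div_mul_I_pow (k : ℤ) {K : ℕ} (hK : K ≠ 0) :
    exp ((2 * Real.pi * k / K : ℝ) * I) ^ K = 1 := by
  rw [← exp_nat_mul]
  convert exp_int_mul_two_pi_mul_I k using 2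
  push_cast
  field_simp

lemma re_conj_exp_mul_I_mul (α : ℝ) (u : ℂ) :
    (starRingEnd ℂ (exp (α * I)) * u).re = ‖u‖ * Real.cos (arg u - α) := by
  conv_lhs => rw [← norm_mul_exp_arg_mul_I u, ← exp_conj, mul_left_comm, ← exp_add]
  have hangle : starRingEnd ℂ (α * I) + arg u * I = ((arg u - α : ℝ) : ℂ) * I := by
    simp only [map_mul, conj_ofReal, conj_I]
    push_cast
    ring
  rw [hangle, re_ofReal_mul, exp_ofReal_mul_I_re]

lemma exists_pow_eq_one_cos_pi_div_mul_norm_le_re {K : ℕ} (hK : K ≠ 0) (u : ℂ) :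
    ∃ z : ℂ, z ^ K = 1 ∧ Real.cos (Real.pi / K) * ‖u‖ ≤ (starRingEnd ℂ z * u).re := by
  have hKpos : (0 : ℝ) < K := by positivity
  set α : ℝ := 2 * Real.pi * round (arg u * K / (2 * Real.pi)) / K
  refine ⟨exp (α * I), exp_two_pi_mul_int_div_mul_I_pow _ hK, ?_⟩
  have hcos : Real.cos (Real.pi / K) ≤ Real.cos (arg u - α) := by
    rw [← Real.cos_abs (arg u - α)]
    refine Real.cos_le_cos_of_nonneg_of_le_pi (abs_nonneg _) ?_
      (abs_sub_two_pi_mul_round_div_le _ hKpos)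
    exact div_le_self Real.pi_pos.le (by exact_mod_cast Nat.one_le_iff_ne_zero.mpr hK)
  rw [re_conj_exp_mul_I_mul, mul_comm]
  exact mul_le_mul_of_nonneg_left hcos (norm_nonneg u)

lemma mul_sum_norm_le_norm_sum {ι : Type*} (s : Finset ι) (c : ℝ) (u z : ι → ℂ)
    (h : ∀ l ∈ s, c * ‖u l‖ ≤ (starRingEnd ℂ (z l) * u l).re) :
    c * ∑ l ∈ s, ‖u l‖ ≤ ‖∑ l ∈ s, starRingEnd ℂ (z l) * u l‖ :=
  calc c * ∑ l ∈ s, ‖u l‖ = ∑ l ∈ s, c * ‖u l‖ := Finset.mul_sum _ _ _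
    _ ≤ ∑ l ∈ s, (starRingEnd ℂ (z l) * u l).re := Finset.sum_le_sum h
    _ = (∑ l ∈ s, starRingEnd ℂ (z l) * u l).re := (re_sum _ _).symm
    _ ≤ ‖∑ l ∈ s, starRingEnd ℂ (z l) * u l‖ := re_le_norm _

lemma one_half_le_cos_pi_div {K : ℕ} (hK : 3 ≤ K) : 1 / 2 ≤ Real.cos (Real.pi / K) := by
  rw [← Real.cos_pi_div_three]
  refine Real.cos_le_cos_of_nonneg_of_le_pi (by positivity) (by linarith [Real.pi_pos]) ?_
  gcongr
  exact_mod_cast hK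

/-- For `K ≥ 3` and `u ∈ ℂⁿ`, there is `z ∈ 𝒜_Kⁿ` with
`|z† u|² ≥ cos²(π/K)·‖u‖₁² ≥ (1/4)·‖u‖₁²`. -/
theorem stmt_16 (n K : ℕ) (hK : 3 ≤ K) (u : Fin n → ℂ) :
    ∃ z : Fin n → ℂ, (∀ l, z l ^ K = 1) ∧
      Real.cos (Real.pi / K) ^ 2 * (∑ l, ‖u l‖) ^ 2 ≤
        ‖∑ l, (starRingEnd ℂ) (z l) * u l‖ ^ 2 ∧
      (1 / 4 : ℝ) * (∑ l, ‖u l‖) ^ 2 ≤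
        ‖∑ l, (starRingEnd ℂ) (z l) * u l‖ ^ 2 := by
  choose z hz_pow hz_re using
    fun l => exists_pow_eq_one_cos_pi_div_mul_norm_le_re (by omega : K ≠ 0) (u l)
  have hhalf := one_half_le_cos_pi_div hK
  have hbound := mul_sum_norm_le_norm_sum Finset.univ _ u z fun l _ => hz_re l
  have hsq : Real.cos (Real.pi / K) ^ 2 * (∑ l, ‖u l‖) ^ 2 ≤
      ‖∑ l, starRingEnd ℂ (z l) * u l‖ ^ 2 := by
    rw [← mul_pow]
    exact pow_le_pow_left₀ (mul_nonneg (by linarith) (by positivity)) hbound 2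
  refine ⟨z, hz_pow, hsq, le_trans ?_ hsq⟩
  gcongr
  nlinarith
end
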